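/- arXiv:0807.2962 — 3 statements merged into one kernel-verified Lean document; each statement's English description precedes it below -/
import Mathlib

section
/- Let C ⊆ M be convex with 0 ∈ C and M_- ⊆ rc C, let p ∈ M satisfy −p ∈ rc C and p ∉ rc C, and assume C is algebraically closed. Define π(c) := inf{α ∈ ℝ | c − αp ∈ C}. Then: (1) π is proper, i.e. π(c) > −∞ for every c ∈ M; (2) the epigraph of π equals {(c,α) ∈ M × ℝ | c − αp ∈ C}; in particular, whenever π(c) < +∞ the infimum defining π(c) is attained. -/
open MeasureTheory Filter

noncomputable section

/-- The recession cone of a set in a real vector space. -/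
def rcone {V : Type*} [AddCommMonoid V] [SMul ℝ V] (A : Set V) : Set V :=
  {y | ∀ a ∈ A, ∀ α : ℝ, 0 < α → a + α • y ∈ A}

variable {Ω : Type*} {m0 : MeasurableSpace Ω} {T : ℕ}

/-- The set `M` of adapted claim processes. -/
def ClaimM (ℱ : Filtration (Fin (T + 1)) m0) : Set (Fin (T + 1) → Ω → ℝ) :=
  {c | Adapted ℱ c}

/-- The set `M₋` of almost surely nonpositive claim processes. -/
def Mminus (P : Measure Ω) (ℱ : Filtration (Fin (T + 1)) m0) :
    Set (Fin (T + 1) → Ω → ℝ) :=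
  {c | c ∈ ClaimM ℱ ∧ ∀ t, ∀ᵐ ω ∂P, c t ω ≤ 0}

/-- The superhedging cost `π(c) = inf {α ∈ ℝ | c - α • p ∈ C} ∈ [-∞,+∞]`. -/
def shc {Ω : Type*} {T : ℕ} (C : Set (Fin (T + 1) → Ω → ℝ))
    (p c : Fin (T + 1) → Ω → ℝ) : EReal :=
  sInf ((fun α : ℝ => (α : EReal)) '' {α : ℝ | c - α • p ∈ C})

/-- A set is algebraically closed if its intersection with every line segment direction is
closed: whenever `x + α • y ∈ C` for every `α ∈ (0,1]`, also `x ∈ C`. -/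
def AlgClosed {V : Type*} [AddCommMonoid V] [SMul ℝ V] (C : Set V) : Prop :=
  ∀ x y : V, (∀ α : ℝ, 0 < α → α ≤ 1 → x + α • y ∈ C) → x ∈ C

/-- Proposition 3, parts 6–7: if `C` is algebraically closed then the
superhedging cost is proper and its epigraph is `{(c,α) | c - α • p ∈ C}`; in particular the
infimum defining `π(c)` is attained whenever it is finite. -/
theorem shc_proper_and_epigraph_of_algClosed
    (P : Measure Ω) [IsProbabilityMeasure P] (ℱ : Filtration (Fin (T + 1)) m0)
    (C : Set (Fin (T + 1) → Ω → ℝ)) (hCM : C ⊆ ClaimM ℱ) (hconv : Convex ℝ C)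
    (h0 : (0 : Fin (T + 1) → Ω → ℝ) ∈ C) (hMm : Mminus P ℱ ⊆ rcone C)
    (hclosed : AlgClosed C)
    (p : Fin (T + 1) → Ω → ℝ) (hpM : p ∈ ClaimM ℱ)
    (hpneg : -p ∈ rcone C) (hppos : p ∉ rcone C) :
    (∀ c ∈ ClaimM ℱ, shc C p c ≠ ⊥) ∧
    (∀ c ∈ ClaimM ℱ, ∀ α : ℝ, shc C p c ≤ (α : EReal) ↔ c - α • p ∈ C) := by
  have hup : ∀ c : Fin (T+1) → Ω → ℝ, ∀ α β : ℝ, α ≤ β → c - α • p ∈ C → c - β • p ∈ C := by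
    intro c α β hab h
    rcases eq_or_lt_of_le hab with rfl | hlt
    · exact h
    · have h2 := hpneg _ h (β - α) (by linarith)
      have key : c - α • p + (β - α) • (-p) = c - β • p := by module
      rwa [key] at h2
  have hkey : ∀ c : Fin (T+1) → Ω → ℝ, ∀ α : ℝ, shc C p c ≤ (α : EReal) → c - α • p ∈ C := by
    intro c α h
    apply hclosed (c - α • p) (-p)
    intro ε hε hε1
    have h1 : shc C p c < ((α + ε : ℝ) : EReal) :=
      lt_of_le_of_lt h (by exact_mod_cast (by linarith : α < α + ε))
    rw [shc] at h1
    obtain ⟨x, hx, hlt⟩ := sInf_lt_iff.mp h1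
    obtain ⟨β, hβ, rfl⟩ := hx
    have hlt' : (β : EReal) < ((α + ε : ℝ) : EReal) := hlt
    have hβle : β ≤ α + ε := le_of_lt (EReal.coe_lt_coe_iff.mp hlt')
    have h3 := hup c β (α + ε) hβle hβ
    have eq : c - α • p + ε • (-p) = c - (α + ε) • p := by module
    rwa [eq]
  constructor
  · intro c hc hbot
    apply hppos
    intro a ha lam hlam
    apply hclosed (a + lam • p) (c - a)
    intro t ht ht1
    have hS : c - (-(lam / t)) • p ∈ C := hkey c _ (by rw [hbot]; exact bot_le)
    have hconvt := hconv ha hS (by linarith : (0:ℝ) ≤ 1 - t) (le_of_lt ht) (by ring)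
    have heq : (1 - t) • a + t • (c - (-(lam / t)) • p) = a + lam • p + t • (c - a) := by
      have ht' : t * (-(lam / t)) = -lam := by field_simp
      rw [smul_sub, smul_smul, ht']
      module
    rwa [heq] at hconvt
  · intro c hc α
    constructor
    · exact hkey c α
    · intro h
      exact sInf_le ⟨α, h, rfl⟩
end
end

section
/- Let S be a convex cost process, D a convex portfolio constraint process, and C the set of claim processes superhedgeable with zero cost. Assume C is closed in probability. Then for every integrable claim process c ∈ M^1: c ∈ C if and only if E ∑_{t=0}^T c_t y_t ≤ 1 for every essentially bounded claim process y ∈ M^∞ with σ_{C¹}(y) ≤ 1. -/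
open MeasureTheory Filter

noncomputable section

/-- The portfolio held before time `t`, with the convention `x₋₁ = 0`. -/
def prevP {Ω : Type*} {T : ℕ} {E : Type*} [Zero E]
    (x : Fin (T + 1) → Ω → E) (t : Fin (T + 1)) : Ω → E :=
  if t.1 = 0 then 0 else x ⟨t.1 - 1, lt_of_le_of_lt (Nat.sub_le _ _) t.isLt⟩

variable {Ω : Type*} {m0 : MeasurableSpace Ω} {T : ℕ} {J : Type*} [Fintype J]

/-- A convex cost process: `S t · ω` is convex, lsc, vanishes at `0`, never `-∞`, and
`S t` is `B(ℝ^J) ⊗ ℱ t`-measurable. -/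
structure CostProcess (ℱ : Filtration (Fin (T + 1)) m0) (J : Type*) [Fintype J] where
  S : Fin (T + 1) → (J → ℝ) → Ω → EReal
  ne_bot : ∀ t x ω, S t x ω ≠ ⊥
  convex : ∀ t ω (x y : J → ℝ) (a b : ℝ), 0 ≤ a → 0 ≤ b → a + b = 1 →
    S t (a • x + b • y) ω ≤ (a : EReal) * S t x ω + (b : EReal) * S t y ω
  lsc : ∀ t ω, LowerSemicontinuous fun x => S t x ω
  zero : ∀ t ω, S t 0 ω = 0
  meas : ∀ t, Measurable[(inferInstance : MeasurableSpace (J → ℝ)).prod (ℱ t)]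
    fun p : (J → ℝ) × Ω => S t p.1 p.2

/-- A convex portfolio constraint process: each `D t ω` is closed, convex, contains `0`,
and `ω ↦ D t ω` is `ℱ t`-measurable. -/
structure ConstraintProcess (ℱ : Filtration (Fin (T + 1)) m0) (J : Type*) [Fintype J] where
  D : Fin (T + 1) → Ω → Set (J → ℝ)
  closed : ∀ t ω, IsClosed (D t ω)
  convex : ∀ t ω, Convex ℝ (D t ω)
  zero_mem : ∀ t ω, (0 : J → ℝ) ∈ D t ω
  meas : ∀ t (U : Set (J → ℝ)), IsOpen U →
    MeasurableSet[ℱ t] {ω | (D t ω ∩ U).Nonempty}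

/-- The set `C` of claim processes superhedgeable with zero cost. -/
def Cset (P : Measure Ω) (ℱ : Filtration (Fin (T + 1)) m0)
    (S : CostProcess ℱ J) (D : ConstraintProcess ℱ J) :
    Set (Fin (T + 1) → Ω → ℝ) :=
  {c | c ∈ ClaimM ℱ ∧ ∃ x : Fin (T + 1) → Ω → (J → ℝ), Adapted ℱ x ∧
    x (Fin.last T) = 0 ∧
    ∀ᵐ ω ∂P, ∀ t, x t ω ∈ D.D t ω ∧
      S.S t (x t ω - prevP x t ω) ω + (c t ω : EReal) ≤ 0}

/-- The set `M¹` of integrable claim processes. -/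
def M1 (P : Measure Ω) (ℱ : Filtration (Fin (T + 1)) m0) :
    Set (Fin (T + 1) → Ω → ℝ) :=
  {c | c ∈ ClaimM ℱ ∧ ∀ t, Integrable (c t) P}

/-- The set `M^∞` of essentially bounded claim processes. -/
def Minf (P : Measure Ω) (ℱ : Filtration (Fin (T + 1)) m0) :
    Set (Fin (T + 1) → Ω → ℝ) :=
  {c | c ∈ ClaimM ℱ ∧ ∀ t, MemLp (c t) ⊤ P}

/-- The bilinear pairing `E ∑ₜ cₜ yₜ`. -/
def pairing (P : Measure Ω) (c y : Fin (T + 1) → Ω → ℝ) : ℝ :=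
  ∫ ω, ∑ t, c t ω * y t ω ∂P

/-- The support function `σ_{C¹}(y) = sup_{c ∈ C¹} E ∑ₜ cₜ yₜ` of a set of integrable
claim processes. -/
def sigmaSup (P : Measure Ω) (A : Set (Fin (T + 1) → Ω → ℝ))
    (y : Fin (T + 1) → Ω → ℝ) : EReal :=
  sSup ((fun c => ((pairing P c y : ℝ) : EReal)) '' A)

/-- `A` is closed in probability (within the space `M` of adapted claim processes). -/
def ClosedInProb (P : Measure Ω) (ℱ : Filtration (Fin (T + 1)) m0)
    (A : Set (Fin (T + 1) → Ω → ℝ)) : Prop :=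
  ∀ cs : ℕ → Fin (T + 1) → Ω → ℝ, (∀ n, cs n ∈ A) →
    ∀ c ∈ ClaimM ℱ, (∀ t, TendstoInMeasure P (fun n => cs n t) atTop (c t)) → c ∈ A

/-!
Identify integrable claim processes with elements of `(L¹)^{T+1}`. The classes of `C¹` form a
convex set, and a closed one: an `L¹`-limit of adapted processes has an adapted version, to which
they converge in probability. If `c ∉ C`, Hahn–Banach separates its class from `C¹` by a continuous
functional, which by `L¹`–`L^∞` duality is `a ↦ ∑ₜ E[gₜ aₜ]` with bounded `gₜ`; since `0 ∈ C` it
can be normalised to be `< 1` on `C¹` and `> 1` at `c`. Replacing `gₜ` by `E[gₜ | ℱₜ]` leaves the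
pairing with adapted processes unchanged and yields the required `y ∈ M^∞`.
-/

open scoped ENNReal Topology

namespace MeasureTheory

section LOneDual

variable {α : Type*} {m0 : MeasurableSpace α} {μ : Measure α} [IsFiniteMeasure μ]

variable (μ) in
/-- The inclusion `L² ⊆ L¹`, realised as Hölder multiplication by the constant `1 ∈ L²`. -/
def Lp.l2ToL1 : Lp ℝ 2 μ →L[ℝ] Lp ℝ 1 μ :=
  (ContinuousLinearMap.mul ℝ ℝ).holderL μ 2 2 1 (Lp.const 2 μ 1)

lemma Lp.coeFn_l2ToL1 (h : Lp ℝ 2 μ) : Lp.l2ToL1 μ h =ᵐ[μ] h := by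
  filter_upwards [(ContinuousLinearMap.mul ℝ ℝ).coeFn_holder (r := 1) (Lp.const 2 μ 1) h,
    Lp.coeFn_const (p := 2) (μ := μ) (c := (1 : ℝ))] with x hx h1
  rw [Lp.l2ToL1, ContinuousLinearMap.holderL_apply_apply, hx, h1]
  simp

lemma Lp.l2ToL1_indicatorConstLp {s : Set α} (hs : MeasurableSet s) (c : ℝ) :
    Lp.l2ToL1 μ (indicatorConstLp 2 hs (measure_ne_top μ s) c)
      = indicatorConstLp 1 hs (measure_ne_top μ s) c := by
  refine Lp.ext ?_
  filter_upwards [Lp.coeFn_l2ToL1 (indicatorConstLp 2 hs (measure_ne_top μ s) c),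
    indicatorConstLp_coeFn (p := 2) (hs := hs) (hμs := measure_ne_top μ s) (c := c),
    indicatorConstLp_coeFn (p := 1) (hs := hs) (hμs := measure_ne_top μ s) (c := c)]
    with x h1 h2 h3
  rw [h1, h2, h3]

lemma integral_mul_indicatorConstLp (g : α → ℝ) {s : Set α} (hs : MeasurableSet s) (c : ℝ) :
    ∫ x, g x * indicatorConstLp 1 hs (measure_ne_top μ s) c x ∂μ = ∫ x in s, g x * c ∂μ := by
  rw [← integral_indicator hs]
  refine integral_congr_ae ?_
  filter_upwards [indicatorConstLp_coeFn (p := 1) (hs := hs) (hμs := measure_ne_top μ s) (c := c)]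
    with x hx
  by_cases hxs : x ∈ s <;> simp [hx, hxs]

/-- The Riesz representative `g ∈ L²` of `φ` restricted to `L²` is essentially bounded by `‖φ‖`,
since `|∫ₛ g| = |φ 𝟙ₛ| ≤ ‖φ‖ μ(s)` for every measurable `s`; the two functionals then agree on
indicators, which span a dense subspace of `L¹`. -/
theorem Lp.lpPairing_mul_surjective :
    Function.Surjective ((ContinuousLinearMap.mul ℝ ℝ).lpPairing μ ∞ 1) := by
  intro φ
  set g := (InnerProductSpace.toDual ℝ (Lp ℝ 2 μ)).symm (φ ∘L Lp.l2ToL1 μ)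
  have hφ : ∀ (s : Set α) (hs : MeasurableSet s) (c : ℝ),
      φ (indicatorConstLp 1 hs (measure_ne_top μ s) c) = ∫ x in s, g x * c ∂μ := by
    intro s hs c
    rw [← Lp.l2ToL1_indicatorConstLp, ← ContinuousLinearMap.comp_apply,
      ← InnerProductSpace.toDual_symm_apply, real_inner_comm,
      L2.inner_indicatorConstLp_eq_setIntegral_inner]
    simp [g]
  have hint : Integrable g μ := (Lp.memLp g).integrable one_le_two
  have hset : ∀ s, MeasurableSet s → |∫ x in s, g x ∂μ| ≤ ∫ x in s, ‖φ‖ ∂μ := by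
    intro s hs
    have := φ.le_opNorm (indicatorConstLp 1 hs (measure_ne_top μ s) 1)
    rw [hφ _ hs, norm_indicatorConstLp one_ne_zero ENNReal.one_ne_top] at this
    simpa [Measure.real, mul_comm] using this
  have hle := ae_le_of_forall_setIntegral_le hint (integrable_const ‖φ‖)
    fun s hs _ => (le_abs_self _).trans (hset s hs)
  have hge := ae_le_of_forall_setIntegral_le hint.neg (integrable_const ‖φ‖)
    fun s hs _ => by simp only [Pi.neg_apply, integral_neg]; exact (neg_le_abs _).trans (hset s hs)
  have hg : MemLp g ∞ μ := memLp_top_of_bound (Lp.aestronglyMeasurable g) ‖φ‖ <| by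
    filter_upwards [hle, hge] with x h1 h2
    exact abs_le.2 ⟨by simp only [Pi.neg_apply] at h2; linarith, h1⟩
  refine ⟨hg.toLp g, ContinuousLinearMap.ext fun u => ?_⟩
  induction u using Lp.induction ENNReal.one_ne_top with
  | indicatorConst c hs hμs =>
    rw [ContinuousLinearMap.lpPairing_eq_integral, Lp.simpleFunc.coe_indicatorConst, hφ _ hs,
      ← integral_mul_indicatorConstLp _ hs]
    refine integral_congr_ae ?_
    filter_upwards [hg.coeFn_toLp] with x hx
    simp [hx]
  | add _ _ _ hu hv => rw [map_add, map_add, hu, hv]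
  | isClosed => exact isClosed_eq (ContinuousLinearMap.continuous _) φ.continuous

theorem Lp.exists_memLp_top_eq_sum_integral_mul {ι : Type*} [Fintype ι]
    (f : (ι → Lp ℝ 1 μ) →L[ℝ] ℝ) :
    ∃ g : ι → α → ℝ, (∀ i, MemLp (g i) ∞ μ) ∧ ∀ u, f u = ∑ i, ∫ x, g i x * u i x ∂μ := by
  classical
  choose g hg using fun i =>
    Lp.lpPairing_mul_surjective (f ∘L ContinuousLinearMap.single ℝ (fun _ : ι => Lp ℝ 1 μ) i)
  refine ⟨fun i => g i, fun i => Lp.memLp (g i), fun u => ?_⟩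
  conv_lhs => rw [← Finset.univ_sum_single u, map_sum]
  refine Finset.sum_congr rfl fun i _ => ?_
  change (f ∘L ContinuousLinearMap.single ℝ _ i) (u i) = _
  rw [← hg i, ContinuousLinearMap.lpPairing_eq_integral]
  rfl

theorem exists_memLp_top_sum_integral_lt_one_lt {ι : Type*} [Fintype ι]
    {K : Set (ι → Lp ℝ 1 μ)} (hconv : Convex ℝ K) (hclosed : IsClosed K) (h0 : 0 ∈ K)
    {a : ι → Lp ℝ 1 μ} (ha : a ∉ K) :
    ∃ g : ι → α → ℝ, (∀ i, MemLp (g i) ∞ μ) ∧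
      (∀ b ∈ K, ∑ i, ∫ x, g i x * b i x ∂μ < 1) ∧ 1 < ∑ i, ∫ x, g i x * a i x ∂μ := by
  obtain ⟨f, u, hK, hu⟩ := geometric_hahn_banach_closed_point hconv hclosed ha
  have hu0 : 0 < u := by simpa using hK 0 h0
  obtain ⟨g, hg, hf⟩ := Lp.exists_memLp_top_eq_sum_integral_mul (u⁻¹ • f)
  refine ⟨g, hg, fun b hb => ?_, ?_⟩ <;> rw [← hf, smul_apply, smul_eq_mul]
  · rw [inv_mul_lt_one₀ hu0]; exact hK b hb
  · rw [one_lt_inv_mul₀ hu0]; exact hu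

end LOneDual

section CondExp

variable {α : Type*} {m0 : MeasurableSpace α} {μ : Measure α}

lemma integral_condExp_mul_of_stronglyMeasurable {m : MeasurableSpace α} (hm : m ≤ m0)
    [IsFiniteMeasure μ] {f g : α → ℝ} (hf : StronglyMeasurable[m] f) (hfi : Integrable f μ)
    (hg : MemLp g ∞ μ) : ∫ x, μ[g | m] x * f x ∂μ = ∫ x, g x * f x ∂μ :=
  calc ∫ x, μ[g | m] x * f x ∂μ = ∫ x, μ[g * f | m] x ∂μ :=
        integral_congr_ae (condExp_mul_of_stronglyMeasurable_right hf
          (hfi.mul_of_top_right hg) (hg.integrable le_top)).symm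
    _ = ∫ x, g x * f x ∂μ := integral_condExp hm

lemma integral_mul_coeFn_toL1 (g : α → ℝ) {f : α → ℝ} (hf : Integrable f μ) :
    ∫ x, g x * hf.toL1 f x ∂μ = ∫ x, g x * f x ∂μ :=
  integral_congr_ae (hf.coeFn_toL1.mono fun x hx => congrArg (g x * ·) hx)

end CondExp

end MeasureTheory

section L1Classes

variable {P : Measure Ω}

def l1Classes {ι : Type*} (P : Measure Ω) (A : Set (ι → Ω → ℝ)) : Set (ι → Lp ℝ 1 P) :=
  {a | ∃ c ∈ A, ∀ i, a i =ᵐ[P] c i}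

lemma convex_l1Classes {ι : Type*} {A : Set (ι → Ω → ℝ)} (hA : Convex ℝ A) :
    Convex ℝ (l1Classes P A) := by
  rintro a₁ ⟨c₁, hc₁, he₁⟩ a₂ ⟨c₂, hc₂, he₂⟩ p q hp hq hpq
  refine ⟨p • c₁ + q • c₂, hA hc₁ hc₂ hp hq hpq, fun i => ?_⟩
  filter_upwards [Lp.coeFn_add (p • a₁ i) (q • a₂ i), Lp.coeFn_smul p (a₁ i),
    Lp.coeFn_smul q (a₂ i), he₁ i, he₂ i] with ω e1 e2 e3 e4 e5
  change ((p • a₁ i + q • a₂ i : Lp ℝ 1 P) : Ω → ℝ) ω = _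
  rw [e1, Pi.add_apply, e2, e3]
  simp [e4, e5]

lemma toL1_mem_l1Classes_iff {ι : Type*} {A : Set (ι → Ω → ℝ)} {c : ι → Ω → ℝ}
    (hc : ∀ i, Integrable (c i) P) :
    (fun i => (hc i).toL1 (c i)) ∈ l1Classes P A ↔ ∃ c' ∈ A, ∀ i, c i =ᵐ[P] c' i :=
  exists_congr fun _ => and_congr_right fun _ => forall_congr' fun i =>
    ⟨((hc i).coeFn_toL1).symm.trans, ((hc i).coeFn_toL1).trans⟩

/-- The `L¹` limit of adapted processes has an adapted version, to which the processes
converge in probability. -/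
lemma isClosed_l1Classes {ℱ : Filtration (Fin (T + 1)) m0} {A : Set (Fin (T + 1) → Ω → ℝ)}
    (hA : A ⊆ ClaimM ℱ) (hcl : ClosedInProb P ℱ A) : IsClosed (l1Classes P A) := by
  refine IsSeqClosed.isClosed fun as a has ha => ?_
  choose cs hcs hcoe using has
  have hlim : ∀ t, Tendsto (fun n => as n t) atTop (𝓝 (a t)) := fun t =>
    ((continuous_apply t).tendsto a).comp ha
  have hmeas : ∀ t, AEStronglyMeasurable[ℱ t] (a t) P := fun t =>
    (isClosed_aestronglyMeasurable (ℱ.le t)).mem_of_tendsto (hlim t) (Eventually.of_forall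
      fun n => ⟨cs n t, ((hA (hcs n)) t).stronglyMeasurable, hcoe n t⟩)
  refine ⟨fun t => (hmeas t).mk, hcl cs hcs _ (fun t => (hmeas t).stronglyMeasurable_mk.measurable)
    fun t => ?_, fun t => (hmeas t).ae_eq_mk⟩
  exact (tendstoInMeasure_of_tendsto_Lp (hlim t)).congr' (Eventually.of_forall (hcoe · t))
    (hmeas t).ae_eq_mk

end L1Classes

lemma EReal.add_coe_le_zero_iff {v : EReal} {r : ℝ} : v + r ≤ 0 ↔ v ≤ ((-r : ℝ) : EReal) := by
  induction v using EReal.rec with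
  | bot => simp
  | top => simp
  | coe v => norm_cast; constructor <;> intro h <;> linarith

lemma prevP_smul_add_smul {E : Type*} [AddCommGroup E] [Module ℝ E]
    (x y : Fin (T + 1) → Ω → E) (a b : ℝ) (t : Fin (T + 1)) :
    prevP (a • x + b • y) t = a • prevP x t + b • prevP y t := by
  unfold prevP
  split <;> simp

lemma prevP_zero {E : Type*} [AddCommGroup E] (t : Fin (T + 1)) :
    prevP (0 : Fin (T + 1) → Ω → E) t = 0 := by
  unfold prevP
  split <;> rfl

section Superhedging

variable {P : Measure Ω} {ℱ : Filtration (Fin (T + 1)) m0} {S : CostProcess ℱ J}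
  {D : ConstraintProcess ℱ J}

lemma zero_mem_Cset : (0 : Fin (T + 1) → Ω → ℝ) ∈ Cset P ℱ S D := by
  refine ⟨fun t => measurable_const, 0, fun t => measurable_const, rfl, ?_⟩
  filter_upwards with ω t
  simp [prevP_zero, S.zero, D.zero_mem]

lemma mem_Cset_of_ae_eq {c c' : Fin (T + 1) → Ω → ℝ} (hc' : c' ∈ Cset P ℱ S D)
    (hc : c ∈ ClaimM ℱ) (h : ∀ t, c t =ᵐ[P] c' t) : c ∈ Cset P ℱ S D := by
  obtain ⟨-, x, hx, hxT, hae⟩ := hc'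
  refine ⟨hc, x, hx, hxT, ?_⟩
  filter_upwards [hae, ae_all_iff.2 h] with ω h1 h2 t
  rw [h2 t]
  exact h1 t

/-- The convex combination of two superhedging strategies superhedges the convex combination of
the claims. -/
lemma convex_Cset : Convex ℝ (Cset P ℱ S D) := by
  rintro c₁ ⟨hc₁, x₁, hx₁, hx₁T, hae₁⟩ c₂ ⟨hc₂, x₂, hx₂, hx₂T, hae₂⟩ a b ha hb hab
  refine ⟨fun t => ((hc₁ t).const_smul a).add ((hc₂ t).const_smul b), a • x₁ + b • x₂,
    fun t => ((hx₁ t).const_smul a).add ((hx₂ t).const_smul b), by simp [hx₁T, hx₂T], ?_⟩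
  filter_upwards [hae₁, hae₂] with ω k₁ k₂ t
  obtain ⟨hD₁, hS₁⟩ := k₁ t
  obtain ⟨hD₂, hS₂⟩ := k₂ t
  refine ⟨D.convex t ω hD₁ hD₂ ha hb hab, ?_⟩
  rw [EReal.add_coe_le_zero_iff] at hS₁ hS₂ ⊢
  have hdiff : (a • x₁ + b • x₂) t ω - prevP (a • x₁ + b • x₂) t ω
      = a • (x₁ t ω - prevP x₁ t ω) + b • (x₂ t ω - prevP x₂ t ω) := by
    rw [prevP_smul_add_smul]
    simp only [Pi.add_apply, Pi.smul_apply]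
    module
  calc S.S t ((a • x₁ + b • x₂) t ω - prevP (a • x₁ + b • x₂) t ω) ω
      ≤ (a : EReal) * S.S t (x₁ t ω - prevP x₁ t ω) ω
          + (b : EReal) * S.S t (x₂ t ω - prevP x₂ t ω) ω := by
        rw [hdiff]; exact S.convex t ω _ _ a b ha hb hab
    _ ≤ (a : EReal) * ((-c₁ t ω : ℝ) : EReal) + (b : EReal) * ((-c₂ t ω : ℝ) : EReal) := by
        gcongr
    _ = ((-(a • c₁ + b • c₂) t ω : ℝ) : EReal) := by
        norm_cast; simp only [Pi.add_apply, Pi.smul_apply, smul_eq_mul]; ring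

end Superhedging

section AdaptedPairing

variable {P : Measure Ω} {ℱ : Filtration (Fin (T + 1)) m0} {g : Fin (T + 1) → Ω → ℝ}

lemma condExp_mem_Minf (hg : ∀ t, MemLp (g t) ∞ P) : (fun t => P[g t | ℱ t]) ∈ Minf P ℱ :=
  ⟨fun _ => stronglyMeasurable_condExp.measurable, fun t => (hg t).condExp le_top⟩

variable [IsFiniteMeasure P]

lemma pairing_condExp_eq {c : Fin (T + 1) → Ω → ℝ} (hc : c ∈ M1 P ℱ)
    (hg : ∀ t, MemLp (g t) ∞ P) :
    pairing P c (fun t => P[g t | ℱ t]) = ∑ t, ∫ ω, g t ω * c t ω ∂P := by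
  rw [pairing, integral_finsetSum (f := fun t ω => c t ω * P[g t | ℱ t] ω) _
    fun t _ => (hc.2 t).mul_of_top_left ((hg t).condExp le_top)]
  refine Finset.sum_congr rfl fun t _ => ?_
  simp_rw [mul_comm (c t _)]
  exact integral_condExp_mul_of_stronglyMeasurable (ℱ.le t) (hc.1 t).stronglyMeasurable
    (hc.2 t) (hg t)

end AdaptedPairing

theorem mem_Cset_iff_pairing_le_one_general
    (P : Measure Ω) [IsProbabilityMeasure P] (ℱ : Filtration (Fin (T + 1)) m0)
    (S : CostProcess ℱ J) (D : ConstraintProcess ℱ J)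
    (hcl : ClosedInProb P ℱ (Cset P ℱ S D)) :
    ∀ c ∈ M1 P ℱ, (c ∈ Cset P ℱ S D ↔
      ∀ y ∈ Minf P ℱ, sigmaSup P (Cset P ℱ S D ∩ M1 P ℱ) y ≤ 1 →
        pairing P c y ≤ 1) := by
  intro c hc
  refine ⟨fun hcC y _ hσ => by
    exact_mod_cast (le_sSup (Set.mem_image_of_mem _ (Set.mem_inter hcC hc))).trans hσ,
    fun h => ?_⟩
  by_contra hcC
  have hnot : (fun t => (hc.2 t).toL1 (c t)) ∉ l1Classes P (Cset P ℱ S D) := by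
    rw [toL1_mem_l1Classes_iff]
    rintro ⟨c', hc', he⟩
    exact hcC (mem_Cset_of_ae_eq hc' hc.1 he)
  have h0 : (0 : Fin (T + 1) → Lp ℝ 1 P) ∈ l1Classes P (Cset P ℱ S D) :=
    ⟨0, zero_mem_Cset, fun _ => Lp.coeFn_zero ℝ 1 P⟩
  obtain ⟨g, hg, hK, hgc⟩ := exists_memLp_top_sum_integral_lt_one_lt
    (convex_l1Classes convex_Cset) (isClosed_l1Classes (fun _ h => h.1) hcl) h0 hnot
  refine (h _ (condExp_mem_Minf hg) (sSup_le ?_)).not_gt ?_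
  · rintro _ ⟨c', ⟨hc'C, hc'⟩, rfl⟩
    have hlt := hK _ ((toL1_mem_l1Classes_iff hc'.2).2 ⟨c', hc'C, fun _ => ae_eq_refl _⟩)
    simp only [integral_mul_coeFn_toL1] at hlt
    rw [← pairing_condExp_eq hc' hg] at hlt
    exact EReal.coe_le_coe_iff.2 hlt.le
  · simpa only [pairing_condExp_eq hc hg, integral_mul_coeFn_toL1] using hgc

/-- Theorem 5, part 1: if `C` is closed in probability then an integrable
claim process belongs to `C` iff `E ∑ₜ cₜ yₜ ≤ 1` for every essentially bounded `y` with
`σ_{C¹}(y) ≤ 1`. -/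
theorem mem_Cset_iff_pairing_le_one
    (P : Measure Ω) [IsProbabilityMeasure P] (ℱ : Filtration (Fin (T + 1)) m0)
    (hcomp : ∀ (t : Fin (T + 1)) (s : Set Ω), P s = 0 → MeasurableSet[ℱ t] s)
    (S : CostProcess ℱ J) (D : ConstraintProcess ℱ J)
    (hcl : ClosedInProb P ℱ (Cset P ℱ S D)) :
    ∀ c ∈ M1 P ℱ, (c ∈ Cset P ℱ S D ↔
      ∀ y ∈ Minf P ℱ, sigmaSup P (Cset P ℱ S D ∩ M1 P ℱ) y ≤ 1 →
        pairing P c y ≤ 1) :=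
  mem_Cset_iff_pairing_le_one_general P ℱ S D hcl
end
end

section
/- Let C' := {(a,b,c) ∈ ℝ³ | there exists x ∈ ℝ with x > −1, a + b ≤ x and a + c ≤ −x}. Then: (1) C' = {(a,b,c) ∈ ℝ³ | 2a + b + c ≤ 0 and a + c < 1}; (2) C' is convex but not closed in ℝ³; (3) C' ∩ ℝ³_+ = {0}, where ℝ³_+ is the nonnegative orthant (the no-arbitrage condition holds). -/
/-- The set of superhedgeable claim triples in the one-period two-state example
(Example 4): `(a,b,c) ∈ C'` iff there is a position `x > -1` in the second risky asset with
`a + b ≤ x` and `a + c ≤ -x`. -/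
def Cex : Set (ℝ × ℝ × ℝ) :=
  {v | ∃ x : ℝ, -1 < x ∧ v.1 + v.2.1 ≤ x ∧ v.1 + v.2.2 ≤ -x}

/-- Example 4: `C' = {(a,b,c) | 2a + b + c ≤ 0, a + c < 1}`; it is
convex but not closed, yet the no-arbitrage condition `C' ∩ ℝ³₊ = {0}` holds. -/
theorem Cex_eq_and_convex_not_closed_and_no_arbitrage :
    Cex = {v : ℝ × ℝ × ℝ | 2 * v.1 + v.2.1 + v.2.2 ≤ 0 ∧ v.1 + v.2.2 < 1} ∧
    Convex ℝ Cex ∧ ¬ IsClosed Cex ∧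
    Cex ∩ {v : ℝ × ℝ × ℝ | 0 ≤ v.1 ∧ 0 ≤ v.2.1 ∧ 0 ≤ v.2.2} = {0} := by
  have hCeq : Cex = {v : ℝ × ℝ × ℝ | 2 * v.1 + v.2.1 + v.2.2 ≤ 0 ∧ v.1 + v.2.2 < 1} := by
    ext ⟨a, b, c⟩
    constructor
    · rintro ⟨x, hx, h1, h2⟩
      exact ⟨by dsimp at *; linarith, by dsimp at *; linarith⟩
    · rintro ⟨h1, h2⟩
      dsimp at *
      exact ⟨-(a + c), by linarith, by linarith, by linarith⟩
  refine ⟨hCeq, ?_, ?_, ?_⟩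
  · rw [hCeq]
    intro p hp q hq t s ht hs hts
    simp only [Set.mem_setOf_eq, Prod.fst_add, Prod.snd_add, Prod.smul_fst, Prod.smul_snd,
      smul_eq_mul] at *
    obtain ⟨hp1, hp2⟩ := hp
    obtain ⟨hq1, hq2⟩ := hq
    constructor
    · nlinarith [mul_le_mul_of_nonneg_left hp1 ht, mul_le_mul_of_nonneg_left hq1 hs]
    · rcases eq_or_lt_of_le ht with h | h
      · have hs1 : s = 1 := by linarith
        subst hs1
        rw [← h]
        simpa using hq2
      · have h1 : t * (p.1 + p.2.2) < t * 1 := by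
          exact mul_lt_mul_of_pos_left hp2 h
        have h2 : s * (q.1 + q.2.2) ≤ s * 1 := by
          exact mul_le_mul_of_nonneg_left hq2.le hs
        nlinarith
  · intro hcl
    have hmem : ((0 : ℝ), (-2 : ℝ), (1 : ℝ)) ∈ Cex := by
      have h3 : Filter.Tendsto (fun n : ℕ => 1 - 1 / ((n : ℝ) + 1)) Filter.atTop
          (nhds (1 : ℝ)) := by
        have h : Filter.Tendsto (fun n : ℕ => 1 - 1 / ((n : ℝ) + 1)) Filter.atTop (nhds (1 - 0)) :=
          Filter.Tendsto.const_sub 1 tendsto_one_div_add_atTop_nhds_zero_nat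
        simpa using h
      have htend : Filter.Tendsto
          (fun n : ℕ => (((0 : ℝ), (-2 : ℝ), 1 - 1 / ((n : ℝ) + 1)) : ℝ × ℝ × ℝ))
          Filter.atTop (nhds ((0 : ℝ), (-2 : ℝ), (1 : ℝ))) := by
        rw [nhds_prod_eq, nhds_prod_eq]
        exact Filter.Tendsto.prodMk tendsto_const_nhds
          (Filter.Tendsto.prodMk tendsto_const_nhds h3)
      refine hcl.mem_of_tendsto htend ?_
      · filter_upwards with n
        rw [hCeq]
        have hpos : (0 : ℝ) < 1 / (n + 1) := by positivity
        constructor <;> dsimp <;> linarith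
    rw [hCeq] at hmem
    have := hmem.2
    norm_num at this
  · ext ⟨a, b, c⟩
    simp only [hCeq, Set.mem_inter_iff, Set.mem_setOf_eq, Set.mem_singleton_iff, Prod.mk_eq_zero]
    constructor
    · rintro ⟨⟨h1, h2⟩, ha, hb, hc⟩
      refine ⟨by linarith, by linarith, by linarith⟩
    · rintro ⟨rfl, rfl, rfl⟩
      norm_num
end
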